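/- arXiv:2504.02379 — 2 statements merged into one kernel-verified Lean document; each statement's English description precedes it below -/
import Mathlib

section
/- Let N ≥ 2 be an integer, A, B > 0 and α > β > 1, and assume h† := (α(α+1)A/(β(β+1)B))^{1/(α−β)} ≤ 2ȟ. Then for every H ∈ [ȟ, ĥ]^{N−1} and all indices 1 ≤ μ, ν ≤ N−1 with μ ≠ ν, the Hessian entry Q_{μν}(H) := Σ_{i=1}^{min(μ,ν)} Σ_{j=max(μ,ν)+1}^{N} L''(Σ_{ℓ=i}^{j−1} h_ℓ) satisfies 0 ≥ Q_{μν}(H) ≥ −(β+1)B / (ȟ^{β+2} |μ−ν|^{β}). -/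
/-! Every term of `Q_{μν}` is `L''` at a sum of `j - i ≥ 2` consecutive spacings, hence at a
point `≥ (j - i) ȟ ≥ 2ȟ ≥ h†`, beyond which `L''` is non-positive. For the lower bound only the
attractive part of `L''` counts: `-L''(x) ≤ β(β+1)B / ((j - i) ȟ)^{β+2}`, and the double sum of
`(j - i)^{-(β+2)}` over `i ≤ min μ ν < max μ ν < j` is at most `|μ - ν|^{-β} / β`, by comparing
twice with the telescoping sums of `k^{-q}`. -/

/-- The Riemann zeta function for real `x > 1`, `ζ(x) = Σ_{n ≥ 1} n^{−x}`. -/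
noncomputable def zetaR (x : ℝ) : ℝ := ∑' n : ℕ, (1 : ℝ) / ((n : ℝ) + 1) ^ x

/-- Second derivative of the Lennard-Jones potential:
`L''(h) = α(α+1)A/h^(α+2) − β(β+1)B/h^(β+2)`. -/
noncomputable def LJ'' (A B α β x : ℝ) : ℝ :=
  α * (α + 1) * A / x ^ (α + 2) - β * (β + 1) * B / x ^ (β + 2)

/-- Hessian entry of the spear energy:
`Q_{μν}(H) = Σ_{i=1}^{min(μ,ν)} Σ_{j=max(μ,ν)+1}^{N} L''(Σ_{ℓ=i}^{j−1} h_ℓ)`. -/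
noncomputable def hessQ (A B α β : ℝ) (N : ℕ) (H : ℕ → ℝ) (μ ν : ℕ) : ℝ :=
  ∑ i ∈ Finset.Icc 1 (min μ ν), ∑ j ∈ Finset.Icc (max μ ν + 1) N,
    LJ'' A B α β (∑ ℓ ∈ Finset.Icc i (j - 1), H ℓ)

open Real Finset

lemma zetaR_pos {β : ℝ} (hβ : 1 < β) : 0 < zetaR β := by
  have hs : Summable fun n : ℕ => (1 : ℝ) / ((n : ℝ) + 1) ^ β := by
    simpa using (summable_nat_add_iff 1).2 (Real.summable_one_div_nat_rpow.2 hβ)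
  exact hs.tsum_pos (fun _ => by positivity) 0 (by norm_num)

lemma mul_sub_mul_rpow_neg_le_sub {q x y : ℝ} (hq : 0 < q) (hx : 0 < x) (hxy : x < y) :
    q * (y - x) * y ^ (-(q + 1)) ≤ x ^ (-q) - y ^ (-q) := by
  have hderiv : ∀ t ∈ Set.Ioo x y, HasDerivAt (fun t : ℝ => t ^ (-q)) (-q * t ^ (-q - 1)) t :=
    fun t ht => Real.hasDerivAt_rpow_const (Or.inl (hx.trans ht.1).ne')
  obtain ⟨ξ, hξ, hslope⟩ := exists_hasDerivAt_eq_slope (fun t : ℝ => t ^ (-q))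
    (fun t => -q * t ^ (-q - 1)) hxy
    (fun t ht =>
      (Real.continuousAt_rpow_const _ _ (Or.inl (hx.trans_le ht.1).ne')).continuousWithinAt)
    hderiv
  have hmono : y ^ (-(q + 1)) ≤ ξ ^ (-q - 1) := by
    rw [neg_add']
    exact Real.rpow_le_rpow_of_nonpos (hx.trans hξ.1) hξ.2.le (by linarith)
  rw [eq_div_iff (sub_pos.2 hxy).ne'] at hslope
  nlinarith [mul_le_mul_of_nonneg_left hmono (mul_nonneg hq.le (sub_pos.2 hxy).le)]

lemma sum_range_rpow_neg_le {q x : ℝ} (hq : 0 < q) (hx : 0 < x) (n : ℕ) :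
    ∑ k ∈ range n, (x + k + 1) ^ (-(q + 1)) ≤ x ^ (-q) / q := by
  have hstep : ∀ k ∈ range n,
      (x + k + 1) ^ (-(q + 1)) ≤ ((x + k) ^ (-q) - (x + k + 1) ^ (-q)) / q := by
    intro k _
    have h := mul_sub_mul_rpow_neg_le_sub hq (by positivity : 0 < x + k) (lt_add_one _)
    rw [le_div_iff₀ hq]
    simpa [mul_comm] using h
  calc ∑ k ∈ range n, (x + k + 1) ^ (-(q + 1))
      ≤ ∑ k ∈ range n, ((x + k) ^ (-q) - (x + k + 1) ^ (-q)) / q := sum_le_sum hstep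
    _ = (x ^ (-q) - (x + n) ^ (-q)) / q := by
      have htel := sum_range_sub' (fun k : ℕ => (x + k) ^ (-q)) n
      simp only [Nat.cast_add, Nat.cast_one, Nat.cast_zero, add_zero, ← add_assoc] at htel
      rw [← sum_div, htel]
    _ ≤ x ^ (-q) / q := by
      gcongr
      exact sub_le_self _ (by positivity)

lemma sum_range_sum_range_rpow_neg_le {q x : ℝ} (hq : 0 < q) (hx : 1 ≤ x) (m n : ℕ) :
    ∑ a ∈ range m, ∑ b ∈ range n, (x + a + b + 1) ^ (-(q + 2)) ≤ x ^ (-q) / q := by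
  have hx0 : 0 < x := by linarith
  have hinner : ∀ a ∈ range (m + 1),
      ∑ b ∈ range n, (x + a + b + 1) ^ (-(q + 2)) ≤ (x + a) ^ (-(q + 1)) / (q + 1) := by
    intro a _
    have h := sum_range_rpow_neg_le (by positivity : 0 < q + 1) (by positivity : 0 < x + a) n
    rwa [show -(q + 1 + 1) = -(q + 2) by ring] at h
  calc ∑ a ∈ range m, ∑ b ∈ range n, (x + a + b + 1) ^ (-(q + 2))
      ≤ ∑ a ∈ range (m + 1), ∑ b ∈ range n, (x + a + b + 1) ^ (-(q + 2)) :=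
        sum_le_sum_of_subset_of_nonneg (range_subset_range.2 m.le_succ)
          (fun _ _ _ => sum_nonneg fun _ _ => by positivity)
    _ ≤ ∑ a ∈ range (m + 1), (x + a) ^ (-(q + 1)) / (q + 1) := sum_le_sum hinner
    _ = (x ^ (-(q + 1)) + ∑ a ∈ range m, (x + a + 1) ^ (-(q + 1))) / (q + 1) := by
      rw [← sum_div, sum_range_succ']
      simp only [Nat.cast_add, Nat.cast_one, Nat.cast_zero, add_zero, add_assoc, add_comm]
    _ ≤ (x ^ (-q) + x ^ (-q) / q) / (q + 1) := by
      have hfirst : x ^ (-(q + 1)) ≤ x ^ (-q) :=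
        Real.rpow_le_rpow_of_exponent_le hx (by linarith)
      gcongr ?_ / _
      exact add_le_add hfirst (sum_range_rpow_neg_le hq hx0 m)
    _ = x ^ (-q) / q := by field_simp

lemma sum_Icc_sum_Icc_sub_eq {R : Type*} [AddCommMonoid R] (F : ℕ → R) {m M : ℕ} (h : m ≤ M)
    (N : ℕ) :
    ∑ i ∈ Icc 1 m, ∑ j ∈ Icc (M + 1) N, F (j - i) =
      ∑ a ∈ range m, ∑ b ∈ range (N - M), F (M - m + a + b + 1) := by
  refine sum_nbij' (fun i => m - i) (fun a => m - a) ?_ ?_ ?_ ?_ ?_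
  all_goals simp only [mem_Icc, mem_range]
  · intro i hi; omega
  · intro a ha; omega
  · intro i hi; omega
  · intro a ha; omega
  · intro i hi
    rw [← Ico_add_one_right_eq_Icc, sum_Ico_eq_sum_range, Nat.add_sub_add_right]
    exact sum_congr rfl fun b _ => congrArg F (by omega)

lemma natCast_sub_mul_le_sum_Icc {N i j : ℕ} {c : ℝ} {H : ℕ → ℝ}
    (hH : ∀ ℓ ∈ Icc 1 (N - 1), c ≤ H ℓ) (hi : 1 ≤ i) (hij : i < j) (hj : j ≤ N) :
    ((j - i : ℕ) : ℝ) * c ≤ ∑ ℓ ∈ Icc i (j - 1), H ℓ := by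
  have h := card_nsmul_le_sum (Icc i (j - 1)) H c fun ℓ hℓ => hH ℓ (by
    rw [mem_Icc] at hℓ ⊢; omega)
  rwa [Nat.card_Icc, nsmul_eq_mul, show j - 1 + 1 - i = j - i by omega] at h

section LennardJones

variable {A B α β : ℝ}

lemma LJ''_nonpos_of_le {x : ℝ} (hA : 0 < A) (hB : 0 < B) (hβ : 0 < β) (hαβ : β < α)
    (hx : (α * (α + 1) * A / (β * (β + 1) * B)) ^ (1 / (α - β)) ≤ x) :
    LJ'' A B α β x ≤ 0 := by
  have hαβ' : 0 < α - β := sub_pos.2 hαβ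
  have hbase : 0 < α * (α + 1) * A / (β * (β + 1) * B) := by
    have : 0 < α := hβ.trans hαβ
    positivity
  have hx0 : 0 < x := (Real.rpow_pos_of_pos hbase _).trans_le hx
  have hpow : α * (α + 1) * A / (β * (β + 1) * B) ≤ x ^ (α - β) := by
    calc α * (α + 1) * A / (β * (β + 1) * B)
        = ((α * (α + 1) * A / (β * (β + 1) * B)) ^ (α - β)⁻¹) ^ (α - β) :=
          (Real.rpow_inv_rpow hbase.le hαβ'.ne').symm
      _ ≤ x ^ (α - β) := by
          rw [← one_div]
          exact Real.rpow_le_rpow (by positivity) hx hαβ'.le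
  rw [div_le_iff₀ (by positivity)] at hpow
  unfold LJ''
  rw [sub_nonpos, show α + 2 = (α - β) + (β + 2) by ring, Real.rpow_add hx0, ← div_div]
  gcongr
  rwa [div_le_iff₀' (by positivity)]

lemma neg_LJ''_le_of_le {x y : ℝ} (hA : 0 ≤ A) (hB : 0 ≤ B) (hα : 0 ≤ α) (hβ : 0 ≤ β)
    (hy : 0 < y) (hyx : y ≤ x) :
    -LJ'' A B α β x ≤ β * (β + 1) * B / y ^ (β + 2) := by
  have hrep : 0 ≤ α * (α + 1) * A / x ^ (α + 2) := by
    have : 0 < x := hy.trans_le hyx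
    positivity
  have hatt : β * (β + 1) * B / x ^ (β + 2) ≤ β * (β + 1) * B / y ^ (β + 2) := by gcongr
  unfold LJ''
  linarith

variable {c : ℝ} {N μ ν : ℕ} {H : ℕ → ℝ}

lemma hessQ_nonpos (hA : 0 < A) (hB : 0 < B) (hβ : 0 < β) (hαβ : β < α) (hc : 0 < c)
    (hdag : (α * (α + 1) * A / (β * (β + 1) * B)) ^ (1 / (α - β)) ≤ 2 * c)
    (hH : ∀ ℓ ∈ Icc 1 (N - 1), c ≤ H ℓ) (hμν : μ ≠ ν) :
    hessQ A B α β N H μ ν ≤ 0 := by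
  have hmM : min μ ν < max μ ν := min_lt_max.2 hμν
  refine sum_nonpos fun i hi => sum_nonpos fun j hj => LJ''_nonpos_of_le hA hB hβ hαβ ?_
  rw [mem_Icc] at hi hj
  have hji : (2 : ℝ) ≤ ((j - i : ℕ) : ℝ) := by exact_mod_cast (by omega : 2 ≤ j - i)
  calc _ ≤ 2 * c := hdag
    _ ≤ ((j - i : ℕ) : ℝ) * c := by gcongr
    _ ≤ _ := natCast_sub_mul_le_sum_Icc hH hi.1 (by omega) hj.2

lemma neg_hessQ_le (hA : 0 ≤ A) (hB : 0 ≤ B) (hα : 0 ≤ α) (hβ : 0 < β) (hc : 0 < c)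
    (hH : ∀ ℓ ∈ Icc 1 (N - 1), c ≤ H ℓ) (hμν : μ ≠ ν) :
    -hessQ A B α β N H μ ν ≤ (β + 1) * B / (c ^ (β + 2) * |(μ : ℝ) - (ν : ℝ)| ^ β) := by
  set m := min μ ν
  set M := max μ ν
  have hmM : m < M := min_lt_max.2 hμν
  have hd : (1 : ℝ) ≤ ((M - m : ℕ) : ℝ) := by exact_mod_cast (by omega : 1 ≤ M - m)
  have habs : |(μ : ℝ) - (ν : ℝ)| = ((M - m : ℕ) : ℝ) := by
    rw [Nat.cast_sub hmM.le, Nat.cast_max, Nat.cast_min, max_sub_min_eq_abs']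
  set K := β * (β + 1) * B / c ^ (β + 2) with hK
  have hterm : ∀ i ∈ Icc 1 m, ∀ j ∈ Icc (M + 1) N,
      -LJ'' A B α β (∑ ℓ ∈ Icc i (j - 1), H ℓ) ≤ K * ((j - i : ℕ) : ℝ) ^ (-(β + 2)) := by
    intro i hi j hj
    rw [mem_Icc] at hi hj
    have hk : (0 : ℝ) < ((j - i : ℕ) : ℝ) := by exact_mod_cast (by omega : 0 < j - i)
    calc _ ≤ β * (β + 1) * B / (((j - i : ℕ) : ℝ) * c) ^ (β + 2) :=
          neg_LJ''_le_of_le hA hB hα hβ.le (by positivity)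
            (natCast_sub_mul_le_sum_Icc hH hi.1 (by omega) hj.2)
      _ = K * ((j - i : ℕ) : ℝ) ^ (-(β + 2)) := by
          rw [hK, Real.mul_rpow hk.le hc.le, Real.rpow_neg hk.le]
          field_simp
  have hreindex := sum_Icc_sum_Icc_sub_eq (fun k : ℕ => K * (k : ℝ) ^ (-(β + 2))) hmM.le N
  simp only [Nat.cast_add, Nat.cast_one] at hreindex
  calc -hessQ A B α β N H μ ν
      = ∑ i ∈ Icc 1 m, ∑ j ∈ Icc (M + 1) N, -LJ'' A B α β (∑ ℓ ∈ Icc i (j - 1), H ℓ) := by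
        simp only [hessQ, sum_neg_distrib, m, M]
    _ ≤ ∑ i ∈ Icc 1 m, ∑ j ∈ Icc (M + 1) N, K * ((j - i : ℕ) : ℝ) ^ (-(β + 2)) :=
        sum_le_sum fun i hi => sum_le_sum (hterm i hi)
    _ = K * ∑ a ∈ range m, ∑ b ∈ range (N - M), (((M - m : ℕ) : ℝ) + a + b + 1) ^ (-(β + 2)) := by
        simp only [hreindex, mul_sum]
    _ ≤ K * (((M - m : ℕ) : ℝ) ^ (-β) / β) := by
        gcongr
        exact sum_range_sum_range_rpow_neg_le hβ hd _ _
    _ = (β + 1) * B / (c ^ (β + 2) * |(μ : ℝ) - (ν : ℝ)| ^ β) := by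
        rw [habs, hK, Real.rpow_neg (by positivity)]
        field_simp

end LennardJones

theorem spear_hessian_offdiagonal_bounds_general
    (N : ℕ) (A B α β : ℝ) (hA : 0 < A) (hB : 0 < B)
    (hβ : 1 < β) (hαβ : β < α)
    (hdag : (α * (α + 1) * A / (β * (β + 1) * B)) ^ (1 / (α - β)) ≤
      2 * (α * A / (β * B * zetaR β)) ^ (1 / (α - β)))
    (H : ℕ → ℝ)
    (Hbox : ∀ k ∈ Finset.Icc 1 (N - 1),
      (α * A / (β * B * zetaR β)) ^ (1 / (α - β)) ≤ H k ∧
      H k ≤ (α * A / (β * B)) ^ (1 / (α - β))) :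
    ∀ μ ∈ Finset.Icc 1 (N - 1), ∀ ν ∈ Finset.Icc 1 (N - 1), μ ≠ ν →
      hessQ A B α β N H μ ν ≤ 0 ∧
      -((β + 1) * B /
          (((α * A / (β * B * zetaR β)) ^ (1 / (α - β))) ^ (β + 2) *
            |(μ : ℝ) - (ν : ℝ)| ^ β)) ≤ hessQ A B α β N H μ ν := by
  intro μ _ ν _ hμν
  have hα : 0 < α := by linarith
  have hζ : 0 < zetaR β := zetaR_pos hβ
  have hc : 0 < (α * A / (β * B * zetaR β)) ^ (1 / (α - β)) := by positivity
  have hH : ∀ k ∈ Icc 1 (N - 1), (α * A / (β * B * zetaR β)) ^ (1 / (α - β)) ≤ H k :=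
    fun k hk => (Hbox k hk).1
  exact ⟨hessQ_nonpos hA hB (by linarith) hαβ hc hdag hH hμν,
    neg_le.mp (neg_hessQ_le hA.le hB.le hα.le (by linarith) hc hH hμν)⟩

/-- Off-diagonal Hessian entries of `J` on the box `[ȟ, ĥ]^{N−1}` are non-positive and
bounded below by `−(β+1)B / (ȟ^{β+2} |μ−ν|^β)`, assuming `h† ≤ 2ȟ`. -/
theorem spear_hessian_offdiagonal_bounds
    (N : ℕ) (hN : 2 ≤ N) (A B α β : ℝ) (hA : 0 < A) (hB : 0 < B)
    (hβ : 1 < β) (hαβ : β < α)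
    (hdag : (α * (α + 1) * A / (β * (β + 1) * B)) ^ (1 / (α - β)) ≤
      2 * (α * A / (β * B * zetaR β)) ^ (1 / (α - β)))
    (H : ℕ → ℝ)
    (Hbox : ∀ k ∈ Finset.Icc 1 (N - 1),
      (α * A / (β * B * zetaR β)) ^ (1 / (α - β)) ≤ H k ∧
      H k ≤ (α * A / (β * B)) ^ (1 / (α - β))) :
    ∀ μ ∈ Finset.Icc 1 (N - 1), ∀ ν ∈ Finset.Icc 1 (N - 1), μ ≠ ν →
      hessQ A B α β N H μ ν ≤ 0 ∧
      -((β + 1) * B /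
          (((α * A / (β * B * zetaR β)) ^ (1 / (α - β))) ^ (β + 2) *
            |(μ : ℝ) - (ν : ℝ)| ^ β)) ≤ hessQ A B α β N H μ ν :=
  spear_hessian_offdiagonal_bounds_general N A B α β hA hB hβ hαβ hdag H Hbox
end

section
/- Let A, B > 0 and β ≥ 3, and let α > β be large enough so that for every N ≥ 2 the spear energy J (for N particles) has a unique global minimizer H*_N = (h*_{N,1}, …, h*_{N,N−1}) in (0,∞)^{N−1}. Then there exists a fixed index k ≥ 1 such that the sequence N ↦ h*_{N,k} does NOT converge to h̄ = (αAζ(α)/(βBζ(β)))^{1/(α−β)} as N → +∞. Equivalently, it is false that for every fixed M, max_{1 ≤ k ≤ M−1} |h*_{N,k} − h̄| → 0 as N → +∞. -/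
/-- The Lennard-Jones potential `L(h) = A/h^α − B/h^β`. -/
noncomputable def LJ (A B α β x : ℝ) : ℝ := A / x ^ α - B / x ^ β

/-- The spear energy `J(H) = Σ_{i=1}^{N−1} Σ_{j=1}^{i} L(Σ_{ℓ=j}^{i} h_ℓ)`. -/
noncomputable def spearJ (A B α β : ℝ) (N : ℕ) (H : ℕ → ℝ) : ℝ :=
  ∑ i ∈ Finset.Icc 1 (N - 1), ∑ j ∈ Finset.Icc 1 i,
    LJ A B α β (∑ ℓ ∈ Finset.Icc j i, H ℓ)

/-!
Suppose every gap `h*_{N,k}` tends to `h̄`. Move a small length `t` from gap `n + 1` to gap `1`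
of `H*_N`: a span of consecutive gaps grows by `t` if it contains gap `1` but not gap `n + 1`,
shrinks by `t` if it contains gap `n + 1` but not gap `1`, and is unchanged otherwise. Spans of
more than `n` gaps only shrink, and since they are longer than the minimizer of `L` their
energy decreases. The remaining energy change involves finitely many gaps, so as `N → ∞` it
tends to the same change for equally spaced gaps `h̄`, whose derivative at `t = 0` is
`-Σ_{d<n} d L'((d+1)h̄)`. The choice of `h̄` is exactly `Σ_d (d+1) L'((d+1)h̄) = 0`, so
`Σ_d d L'((d+1)h̄) = -Σ_d L'((d+1)h̄)`, which is positive because `L'` is negative before the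
minimizer of `L` and positive after it. Hence for large `n` and small `t` the perturbation
lowers the energy of `H*_N` for large `N`, contradicting minimality.
-/

open Finset Filter Topology

lemma HasDerivAt.nonneg_of_forall_Ioc_le {f : ℝ → ℝ} {f' a b : ℝ} (hf : HasDerivAt f f' a)
    (hab : a < b) (hle : ∀ t ∈ Set.Ioc a b, f a ≤ f t) : 0 ≤ f' := by
  refine ge_of_tendsto hf.tendsto_slope_zero_right ?_
  filter_upwards [Ioo_mem_nhdsGT (sub_pos.2 hab)] with t ht
  exact smul_nonneg (inv_nonneg.2 ht.1.le)
    (sub_nonneg.2 (hle _ ⟨by linarith [ht.1], by linarith [ht.2]⟩))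

noncomputable def ljDeriv (A B α β x : ℝ) : ℝ := β * B * x ^ (-β - 1) - α * A * x ^ (-α - 1)

noncomputable def ljMinimizer (A B α β : ℝ) : ℝ := (α * A / (β * B)) ^ (1 / (α - β))

lemma hasDerivAt_LJ {A B α β x : ℝ} (hx : 0 < x) :
    HasDerivAt (LJ A B α β) (ljDeriv A B α β x) x := by
  have hLJ : LJ A B α β =ᶠ[𝓝 x] fun y => A * y ^ (-α) - B * y ^ (-β) := by
    filter_upwards [lt_mem_nhds hx] with y hy
    simp only [LJ, Real.rpow_neg hy.le, div_eq_mul_inv]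
  have hα := (Real.hasDerivAt_rpow_const (p := -α) (Or.inl hx.ne')).const_mul A
  have hβ := (Real.hasDerivAt_rpow_const (p := -β) (Or.inl hx.ne')).const_mul B
  refine ((hα.sub hβ).congr_of_eventuallyEq hLJ).congr_deriv ?_
  unfold ljDeriv
  ring

lemma continuousAt_LJ {A B α β x : ℝ} (hx : 0 < x) : ContinuousAt (LJ A B α β) x :=
  (hasDerivAt_LJ hx).continuousAt

section Minimizer

variable {A B α β : ℝ} (hA : 0 < A) (hB : 0 < B) (hβ : 0 < β) (hαβ : β < α)
include hA hB hβ hαβ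

lemma ljMinimizer_pos : 0 < ljMinimizer A B α β :=
  Real.rpow_pos_of_pos (by have := hβ.trans hαβ; positivity) _

lemma ljMinimizer_rpow : ljMinimizer A B α β ^ (α - β) = α * A / (β * B) := by
  rw [ljMinimizer, one_div,
    Real.rpow_inv_rpow (by have := hβ.trans hαβ; positivity) (sub_ne_zero.2 hαβ.ne')]

lemma ljDeriv_eq {x : ℝ} (hx : 0 < x) :
    ljDeriv A B α β x =
      β * B * x ^ (-α - 1) * (x ^ (α - β) - ljMinimizer A B α β ^ (α - β)) := by
  rw [ljMinimizer_rpow hA hB hβ hαβ, mul_sub, mul_assoc _ (x ^ _), ← Real.rpow_add hx,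
    show -α - 1 + (α - β) = -β - 1 by ring, ljDeriv]
  field_simp

lemma ljDeriv_mul_sub_neg {x : ℝ} (hx : 0 < x) (hne : x ≠ ljMinimizer A B α β) :
    ljDeriv A B α β x * (ljMinimizer A B α β - x) < 0 := by
  have hx₀ := ljMinimizer_pos hA hB hβ hαβ
  have hγ : 0 < α - β := sub_pos.2 hαβ
  have hc : 0 < β * B * x ^ (-α - 1) := by positivity
  rw [ljDeriv_eq hA hB hβ hαβ hx, mul_assoc]
  refine mul_neg_of_pos_of_neg hc ?_
  rcases hne.lt_or_gt with h | h
  · exact mul_neg_of_neg_of_pos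
      (sub_neg.2 (Real.rpow_lt_rpow hx.le h hγ)) (sub_pos.2 h)
  · exact mul_neg_of_pos_of_neg
      (sub_pos.2 (Real.rpow_lt_rpow hx₀.le h hγ)) (sub_neg.2 h)

lemma monotoneOn_LJ : MonotoneOn (LJ A B α β) (Set.Ici (ljMinimizer A B α β)) := by
  have hx₀ := ljMinimizer_pos hA hB hβ hαβ
  refine monotoneOn_of_deriv_nonneg (convex_Ici _) ?_ ?_ ?_
  · exact fun x hx => (continuousAt_LJ (hx₀.trans_le hx)).continuousWithinAt
  · rw [interior_Ici]
    exact fun x hx => (hasDerivAt_LJ (hx₀.trans hx)).differentiableAt.differentiableWithinAt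
  · rw [interior_Ici]
    intro x hx
    have hneg := ljDeriv_mul_sub_neg hA hB hβ hαβ (hx₀.trans hx) (ne_of_gt hx)
    rw [(hasDerivAt_LJ (hx₀.trans hx)).deriv]
    nlinarith [sub_neg.2 (show ljMinimizer A B α β < x from hx)]

end Minimizer

lemma summable_succ_rpow {p : ℝ} (hp : p < -1) : Summable (fun n : ℕ => ((n : ℝ) + 1) ^ p) := by
  have := (summable_nat_add_iff 1).2 (Real.summable_nat_rpow.2 hp)
  exact_mod_cast this

lemma hasSum_zetaR {s : ℝ} (hs : 1 < s) :
    HasSum (fun n : ℕ => ((n : ℝ) + 1) ^ (-s)) (zetaR s) := by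
  have h := (summable_succ_rpow (neg_lt_neg hs)).hasSum
  convert h using 1
  exact tsum_congr fun n => by rw [Real.rpow_neg (by positivity), one_div]

lemma zetaR_pos_s10 {s : ℝ} (hs : 1 < s) : 0 < zetaR s :=
  hasSum_lt (f := 0) (i := 0) (fun n => by positivity) (by positivity) hasSum_zero (hasSum_zetaR hs)

section Series

variable {A B α β c : ℝ}

lemma ljDeriv_succ_mul (hc : 0 < c) (n : ℕ) :
    ljDeriv A B α β ((n + 1) * c) =
      β * B * c ^ (-β - 1) * ((n : ℝ) + 1) ^ (-β - 1)
        - α * A * c ^ (-α - 1) * ((n : ℝ) + 1) ^ (-α - 1) := by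
  rw [ljDeriv, Real.mul_rpow (by positivity) hc.le, Real.mul_rpow (by positivity) hc.le]
  ring

lemma summable_ljDeriv_succ_mul (hβ : 0 < β) (hα : 0 < α) (hc : 0 < c) :
    Summable (fun n : ℕ => ljDeriv A B α β ((n + 1) * c)) := by
  simp only [ljDeriv_succ_mul hc]
  exact ((summable_succ_rpow (by linarith)).mul_left _).sub
    ((summable_succ_rpow (by linarith)).mul_left _)

lemma hasSum_succ_mul_ljDeriv_succ_mul (hβ : 1 < β) (hα : 1 < α) (hc : 0 < c) :
    HasSum (fun n : ℕ => ((n : ℝ) + 1) * ljDeriv A B α β ((n + 1) * c))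
      ((β * B * zetaR β * c ^ (-β) - α * A * zetaR α * c ^ (-α)) / c) := by
  have hpow : ∀ (s : ℝ) (n : ℕ), ((n : ℝ) + 1) * ((n : ℝ) + 1) ^ (-s - 1) = ((n : ℝ) + 1) ^ (-s) :=
    fun s n => by rw [Real.rpow_sub_one (by positivity)]; field_simp
  have hval : (β * B * zetaR β * c ^ (-β) - α * A * zetaR α * c ^ (-α)) / c =
      β * B * c ^ (-β - 1) * zetaR β - α * A * c ^ (-α - 1) * zetaR α := by
    rw [Real.rpow_sub_one hc.ne', Real.rpow_sub_one hc.ne']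
    ring
  rw [hval]
  refine (((hasSum_zetaR hβ).mul_left _).sub ((hasSum_zetaR hα).mul_left _)).congr_fun fun n => ?_
  rw [ljDeriv_succ_mul hc, mul_sub, ← hpow β n, ← hpow α n]
  ring

/-- The weights `x₀ - (n+1)c` make every term nonpositive, and `hsum` says that they only
rescale the sum by `x₀`. -/
lemma tsum_ljDeriv_succ_mul_neg (hA : 0 < A) (hB : 0 < B) (hβ : 0 < β) (hαβ : β < α)
    (hc : 0 < c) (hsum : HasSum (fun n : ℕ => ((n : ℝ) + 1) * ljDeriv A B α β ((n + 1) * c)) 0) :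
    ∑' n : ℕ, ljDeriv A B α β ((n + 1) * c) < 0 := by
  set x₀ := ljMinimizer A B α β
  have hx₀ : 0 < x₀ := ljMinimizer_pos hA hB hβ hαβ
  have hΦ := (summable_ljDeriv_succ_mul (A := A) (B := B) hβ (hβ.trans hαβ) hc).hasSum
  have hweighted : HasSum (fun n : ℕ => ljDeriv A B α β ((n + 1) * c) * (x₀ - (n + 1) * c))
      (x₀ * ∑' n : ℕ, ljDeriv A B α β ((n + 1) * c)) := by
    simpa using ((hΦ.mul_left x₀).sub (hsum.mul_left c)).congr_fun fun n => by ring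
  have hterm : ∀ n : ℕ, (n + 1) * c ≠ x₀ →
      ljDeriv A B α β ((n + 1) * c) * (x₀ - (n + 1) * c) < 0 :=
    fun n hn => ljDeriv_mul_sub_neg hA hB hβ hαβ (by positivity) hn
  have hle : ∀ n : ℕ, ljDeriv A B α β ((n + 1) * c) * (x₀ - (n + 1) * c) ≤ 0 := fun n => by
    by_cases hn : (n + 1) * c = x₀
    · simp [hn]
    · exact (hterm n hn).le
  obtain ⟨m, hm⟩ : ∃ m : ℕ, ((m : ℝ) + 1) * c ≠ x₀ := by
    by_cases h0 : ((0 : ℕ) + 1 : ℝ) * c = x₀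
    · exact ⟨1, by push_cast at h0 ⊢; linarith⟩
    · exact ⟨0, h0⟩
  have hneg := hasSum_lt hle (hterm m hm) hweighted hasSum_zero
  exact neg_of_mul_neg_right hneg hx₀.le

end Series

noncomputable def shiftGap (h : ℕ → ℝ) (q : ℕ) (t : ℝ) : ℕ → ℝ := h + Pi.single 1 t - Pi.single q t

/-- The energy change, under `shiftGap h (n + 1) t`, of the spans `[j, j + d]` of at most `n`
gaps starting no later than gap `n + 1`; these include every span that grows. -/
noncomputable def nearGain (A B α β : ℝ) (n : ℕ) (h : ℕ → ℝ) (t : ℝ) : ℝ :=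
  ∑ j ∈ Icc 1 (n + 1), ∑ d ∈ range n,
    (LJ A B α β (∑ ℓ ∈ Icc j (j + d), shiftGap h (n + 1) t ℓ)
      - LJ A B α β (∑ ℓ ∈ Icc j (j + d), h ℓ))

lemma sum_shiftGap (h : ℕ → ℝ) (q : ℕ) (t : ℝ) (s : Finset ℕ) :
    ∑ ℓ ∈ s, shiftGap h q t ℓ =
      ∑ ℓ ∈ s, h ℓ + t * ((if 1 ∈ s then 1 else 0) - (if q ∈ s then 1 else 0)) := by
  simp only [shiftGap, Pi.add_apply, Pi.sub_apply, sum_sub_distrib, sum_add_distrib,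
    sum_pi_single']
  split_ifs <;> ring

lemma shiftGap_pos {h : ℕ → ℝ} {q : ℕ} {t : ℝ} {s : Finset ℕ} (hh : ∀ ℓ ∈ s, 0 < h ℓ)
    (ht : 0 ≤ t) (hq : t < h q) : ∀ ℓ ∈ s, 0 < shiftGap h q t ℓ := by
  intro ℓ hℓ
  have := hh ℓ hℓ
  simp only [shiftGap, Pi.add_apply, Pi.sub_apply, Pi.single_apply]
  split_ifs with h1 h2 <;> subst_vars <;> linarith

lemma LJ_sum_shiftGap_sub_nonpos {A B α β x₀ m t : ℝ} {n i j : ℕ} {h : ℕ → ℝ}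
    (hmono : MonotoneOn (LJ A B α β) (Set.Ici x₀)) (hnonneg : ∀ ℓ ∈ Icc j i, 0 ≤ h ℓ)
    (hlow : ∀ ℓ ∈ Icc 1 (2 * n + 1), m ≤ h ℓ) (ht : 0 ≤ t) (hfar : x₀ + t ≤ (n + 1) * m)
    (hj : 1 ≤ j) (hnear : ¬ (j ≤ n + 1 ∧ i < j + n)) :
    LJ A B α β (∑ ℓ ∈ Icc j i, shiftGap h (n + 1) t ℓ) - LJ A B α β (∑ ℓ ∈ Icc j i, h ℓ) ≤ 0 := by
  rw [sum_shiftGap]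
  by_cases h1 : 1 ∈ Icc j i <;> by_cases hq : n + 1 ∈ Icc j i
  · simp [h1, hq]
  · simp only [mem_Icc] at h1 hq; omega
  · have hlong : j + n ≤ i := by simp only [mem_Icc] at hq; omega
    have hsub : ∑ ℓ ∈ Icc j (j + n), h ℓ ≤ ∑ ℓ ∈ Icc j i, h ℓ :=
      sum_le_sum_of_subset_of_nonneg (Icc_subset_Icc le_rfl hlong) fun ℓ hℓ _ => hnonneg ℓ hℓ
    have hblock : (n + 1) * m ≤ ∑ ℓ ∈ Icc j (j + n), h ℓ := by
      have := card_nsmul_le_sum (Icc j (j + n)) h m fun ℓ hℓ =>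
        hlow ℓ (by simp only [mem_Icc] at hℓ hq ⊢; omega)
      rwa [Nat.card_Icc, add_assoc, add_tsub_cancel_left, nsmul_eq_mul, Nat.cast_add_one] at this
    rw [if_neg h1, if_pos hq, zero_sub, mul_neg, mul_one, ← sub_eq_add_neg, sub_nonpos]
    exact hmono (by simp only [Set.mem_Ici]; linarith) (by simp only [Set.mem_Ici]; linarith)
      (by linarith)
  · simp [h1, hq]

lemma spearJ_shiftGap_sub_le_nearGain {A B α β x₀ m t : ℝ} {N n : ℕ} {h : ℕ → ℝ}
    (hmono : MonotoneOn (LJ A B α β) (Set.Ici x₀)) (hN : 2 * n + 1 ≤ N - 1)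
    (hpos : ∀ ℓ ∈ Icc 1 (N - 1), 0 < h ℓ) (hlow : ∀ ℓ ∈ Icc 1 (2 * n + 1), m ≤ h ℓ)
    (ht : 0 ≤ t) (hfar : x₀ + t ≤ (n + 1) * m) :
    spearJ A B α β N (shiftGap h (n + 1) t) - spearJ A B α β N h ≤ nearGain A B α β n h t := by
  set F : ℕ × ℕ → ℝ := fun p => LJ A B α β (∑ ℓ ∈ Icc p.2 p.1, shiftGap h (n + 1) t ℓ)
      - LJ A B α β (∑ ℓ ∈ Icc p.2 p.1, h ℓ)
  set T := (Icc 1 (N - 1) ×ˢ Icc 1 (N - 1)).filter (fun p => p.2 ≤ p.1)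
  have hT : spearJ A B α β N (shiftGap h (n + 1) t) - spearJ A B α β N h = ∑ p ∈ T, F p := by
    rw [sum_finset_product T (Icc 1 (N - 1)) (fun i => Icc 1 i) (fun p => by simp [T]; omega)]
    simp only [spearJ, F, ← sum_sub_distrib]
  have hnear : ∑ p ∈ T with p.2 ≤ n + 1 ∧ p.1 < p.2 + n, F p = nearGain A B α β n h t := by
    rw [sum_finset_product_right _ (Icc 1 (n + 1)) (fun j => Ico j (j + n))
      (fun p => by simp [T]; omega)]
    simp only [sum_Ico_eq_sum_range, add_tsub_cancel_left, F, nearGain]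
  have hrest : ∀ p ∈ T, ¬ (p.2 ≤ n + 1 ∧ p.1 < p.2 + n) → F p ≤ 0 := by
    rintro ⟨i, j⟩ hp hnot
    simp only [T, mem_filter, mem_product, mem_Icc] at hp
    exact LJ_sum_shiftGap_sub_nonpos hmono
      (fun ℓ hℓ => (hpos ℓ (by simp only [mem_Icc] at hℓ ⊢; omega)).le) hlow ht hfar hp.1.2.1 hnot
  rw [hT, ← sum_filter_add_sum_filter_not T (fun p => p.2 ≤ n + 1 ∧ p.1 < p.2 + n), hnear]
  linarith [sum_nonpos fun p hp => hrest p (mem_filter.1 hp).1 (mem_filter.1 hp).2]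

lemma nearGain_zero (A B α β : ℝ) (n : ℕ) (h : ℕ → ℝ) : nearGain A B α β n h 0 = 0 := by
  simp [nearGain, shiftGap]

lemma tendsto_LJ_sum {ι : Type*} {l : Filter ι} {A B α β : ℝ} {s : Finset ℕ}
    {g : ι → ℕ → ℝ} {g₀ : ℕ → ℝ} (hg : ∀ ℓ ∈ s, Tendsto (fun i => g i ℓ) l (𝓝 (g₀ ℓ)))
    (hpos : 0 < ∑ ℓ ∈ s, g₀ ℓ) :
    Tendsto (fun i => LJ A B α β (∑ ℓ ∈ s, g i ℓ)) l (𝓝 (LJ A B α β (∑ ℓ ∈ s, g₀ ℓ))) :=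
  (continuousAt_LJ hpos).tendsto.comp (tendsto_finsetSum s hg)

lemma tendsto_nearGain {ι : Type*} {l : Filter ι} {A B α β P t : ℝ} {n : ℕ} {h : ι → ℕ → ℝ}
    (ht : 0 ≤ t) (htP : t < P) (hconv : ∀ ℓ, 1 ≤ ℓ → Tendsto (fun i => h i ℓ) l (𝓝 P)) :
    Tendsto (fun i => nearGain A B α β n (h i) t) l (𝓝 (nearGain A B α β n (fun _ => P) t)) := by
  have hP : 0 < P := ht.trans_lt htP
  refine tendsto_finsetSum _ fun j hj => tendsto_finsetSum _ fun d _ => ?_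
  have hwin : ∀ ℓ ∈ Icc j (j + d), 1 ≤ ℓ := fun ℓ hℓ => (mem_Icc.1 hj).1.trans (mem_Icc.1 hℓ).1
  have hne : (Icc j (j + d)).Nonempty := nonempty_Icc.2 (Nat.le_add_right j d)
  refine (tendsto_LJ_sum (fun ℓ hℓ => ?_) (sum_pos (shiftGap_pos (fun _ _ => hP) ht htP) hne)).sub
    (tendsto_LJ_sum (fun ℓ hℓ => hconv ℓ (hwin ℓ hℓ)) (sum_pos (fun _ _ => hP) hne))
  exact ((hconv ℓ (hwin ℓ hℓ)).add_const _).sub_const _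

lemma hasDerivAt_nearGain_const {A B α β P : ℝ} (hP : 0 < P) (n : ℕ) :
    HasDerivAt (nearGain A B α β n (fun _ => P))
      (-∑ d ∈ range n, (d : ℝ) * ljDeriv A B α β ((d + 1) * P)) 0 := by
  set c : ℕ → ℕ → ℝ := fun j d =>
    (if 1 ∈ Icc j (j + d) then 1 else 0) - (if n + 1 ∈ Icc j (j + d) then 1 else 0)
  have hcount : ∀ d ∈ range n, ∑ j ∈ Icc 1 (n + 1), c j d = -d := by
    intro d hd
    have h1 : {j ∈ Icc 1 (n + 1) | 1 ∈ Icc j (j + d)} = {1} := by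
      ext j; simp only [mem_filter, mem_Icc, mem_singleton]; omega
    have hq : {j ∈ Icc 1 (n + 1) | n + 1 ∈ Icc j (j + d)} = Icc (n + 1 - d) (n + 1) := by
      ext j; simp only [mem_filter, mem_Icc, mem_range] at hd ⊢; omega
    simp only [c, sum_sub_distrib, sum_boole, h1, hq, card_singleton, Nat.card_Icc]
    rw [mem_range] at hd
    rw [show n + 1 + 1 - (n + 1 - d) = d + 1 by omega]
    push_cast
    ring
  have hwin : ∀ j d : ℕ, ∑ ℓ ∈ Icc j (j + d), (fun _ => P) ℓ = (d + 1) * P := fun j d => by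
    rw [sum_const, Nat.card_Icc, nsmul_eq_mul, show j + d + 1 - j = d + 1 by omega]
    push_cast; ring
  have hform : nearGain A B α β n (fun _ => P) = fun t => ∑ j ∈ Icc 1 (n + 1), ∑ d ∈ range n,
      (LJ A B α β ((d + 1) * P + t * c j d) - LJ A B α β ((d + 1) * P)) := by
    ext t; simp only [nearGain, sum_shiftGap, hwin, c]
  have hterm : ∀ j d : ℕ, HasDerivAt (fun t => LJ A B α β ((d + 1) * P + t * c j d)
      - LJ A B α β ((d + 1) * P)) (ljDeriv A B α β ((d + 1) * P) * c j d) 0 := fun j d =>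
    ((HasDerivAt.comp_of_eq 0 (hasDerivAt_LJ (by positivity))
      ((hasDerivAt_mul_const (c j d)).const_add _) (by simp)).sub_const _)
  rw [hform]
  refine (HasDerivAt.fun_sum fun j _ => HasDerivAt.fun_sum fun d _ => hterm j d).congr_deriv ?_
  rw [sum_comm, ← sum_neg_distrib]
  refine sum_congr rfl fun d hd => ?_
  rw [← mul_sum, hcount d hd]
  ring

lemma nearGain_const_nonneg_of_tendsto {A B α β x₀ P t : ℝ} {n : ℕ} {Hstar : ℕ → ℕ → ℝ}
    (hmono : MonotoneOn (LJ A B α β) (Set.Ici x₀)) (hfar : x₀ + P / 2 ≤ (n + 1) * (P / 2))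
    (hpos : ∀ N : ℕ, 2 ≤ N → ∀ k ∈ Icc 1 (N - 1), 0 < Hstar N k)
    (hmin : ∀ N : ℕ, 2 ≤ N → ∀ H : ℕ → ℝ, (∀ k ∈ Icc 1 (N - 1), 0 < H k) →
      spearJ A B α β N (Hstar N) ≤ spearJ A B α β N H)
    (hconv : ∀ k, 1 ≤ k → Tendsto (fun N => Hstar N k) atTop (𝓝 P)) (ht : 0 < t) (htP : t ≤ P / 2) :
    0 ≤ nearGain A B α β n (fun _ => P) t := by
  refine ge_of_tendsto (tendsto_nearGain ht.le (by linarith) hconv) ?_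
  have hlow : ∀ᶠ N in atTop, ∀ ℓ ∈ Icc 1 (2 * n + 1), P / 2 < Hstar N ℓ :=
    (eventually_all_finset _).2 fun ℓ hℓ =>
      (hconv ℓ (mem_Icc.1 hℓ).1).eventually (lt_mem_nhds (by linarith))
  filter_upwards [hlow, eventually_ge_atTop (2 * n + 2)] with N hlowN hN
  have hN2 : 2 ≤ N := by omega
  have hshift := hmin N hN2 _ (shiftGap_pos (hpos N hN2) ht.le
    (htP.trans_lt (hlowN (n + 1) (mem_Icc.2 ⟨by omega, by omega⟩))))
  have hbound := spearJ_shiftGap_sub_le_nearGain hmono (by omega) (hpos N hN2)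
    (fun ℓ hℓ => (hlowN ℓ hℓ).le) ht.le (by linarith)
  linarith

noncomputable def hbar (A B α β : ℝ) : ℝ := (α * A * zetaR α / (β * B * zetaR β)) ^ (1 / (α - β))

section Spacing

variable {A B α β : ℝ} (hA : 0 < A) (hB : 0 < B) (hβ : 1 < β) (hαβ : β < α)
include hA hB hβ hαβ

lemma hbar_pos : 0 < hbar A B α β := by
  have := zetaR_pos_s10 hβ
  have := zetaR_pos_s10 (hβ.trans hαβ)
  exact Real.rpow_pos_of_pos (by have := hβ.trans hαβ; positivity) _

lemma hasSum_succ_mul_ljDeriv_succ_mul_hbar :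
    HasSum (fun n : ℕ => ((n : ℝ) + 1) * ljDeriv A B α β ((n + 1) * hbar A B α β)) 0 := by
  have hP := hbar_pos hA hB hβ hαβ
  have hζβ := zetaR_pos_s10 hβ
  have hζα := zetaR_pos_s10 (hβ.trans hαβ)
  have hpow : hbar A B α β ^ (α - β) = α * A * zetaR α / (β * B * zetaR β) := by
    rw [hbar, one_div,
      Real.rpow_inv_rpow (by have := hβ.trans hαβ; positivity) (sub_ne_zero.2 hαβ.ne')]
  have hbalance :
      β * B * zetaR β * hbar A B α β ^ (-β) = α * A * zetaR α * hbar A B α β ^ (-α) := by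
    rw [show -β = (α - β) + -α by ring, Real.rpow_add hP, hpow]
    field_simp
  simpa [hbalance] using hasSum_succ_mul_ljDeriv_succ_mul (A := A) (B := B) hβ (hβ.trans hαβ) hP

lemma eventually_pos_sum_range_mul_ljDeriv_hbar :
    ∀ᶠ n : ℕ in atTop,
      0 < ∑ d ∈ range n, (d : ℝ) * ljDeriv A B α β ((d + 1) * hbar A B α β) := by
  have hP := hbar_pos hA hB hβ hαβ
  have hsum := hasSum_succ_mul_ljDeriv_succ_mul_hbar hA hB hβ hαβ
  have hneg := tsum_ljDeriv_succ_mul_neg hA hB (by linarith) hαβ hP hsum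
  have hΦ := (summable_ljDeriv_succ_mul (A := A) (B := B) (α := α) (β := β) (by linarith)
    (by linarith) hP).hasSum
  refine ((hsum.sub hΦ).congr_fun fun d => by ring).tendsto_sum_nat.eventually
    (lt_mem_nhds (by linarith))

end Spacing

theorem spear_no_uniform_convergence_general
    (A B α β : ℝ) (hA : 0 < A) (hB : 0 < B) (hβ : 3 ≤ β) (hαβ : β < α)
    (Hstar : ℕ → ℕ → ℝ)
    (hpos : ∀ N : ℕ, 2 ≤ N → ∀ k ∈ Finset.Icc 1 (N - 1), 0 < Hstar N k)
    (hmin : ∀ N : ℕ, 2 ≤ N → ∀ H : ℕ → ℝ,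
      (∀ k ∈ Finset.Icc 1 (N - 1), 0 < H k) →
      spearJ A B α β N (Hstar N) ≤ spearJ A B α β N H) :
    ∃ k : ℕ, 1 ≤ k ∧
      ¬ Filter.Tendsto (fun N : ℕ => Hstar N k) Filter.atTop
        (nhds ((α * A * zetaR α / (β * B * zetaR β)) ^ (1 / (α - β)))) := by
  by_contra! hconv
  change ∀ k, 1 ≤ k → Tendsto (fun N => Hstar N k) atTop (𝓝 (hbar A B α β)) at hconv
  set P := hbar A B α β
  have hP : 0 < P := hbar_pos hA hB (by linarith) hαβ
  have hlarge : ∀ᶠ n : ℕ in atTop, ljMinimizer A B α β + P / 2 ≤ (n + 1) * (P / 2) :=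
    ((tendsto_natCast_atTop_atTop.atTop_add tendsto_const_nhds).atTop_mul_const
      (half_pos hP)).eventually_ge_atTop _
  obtain ⟨n, hgain, hfar⟩ :=
    ((eventually_pos_sum_range_mul_ljDeriv_hbar hA hB (by linarith) hαβ).and hlarge).exists
  have hnonneg : ∀ t ∈ Set.Ioc 0 (P / 2),
      nearGain A B α β n (fun _ => P) 0 ≤ nearGain A B α β n (fun _ => P) t := fun t ht => by
    rw [nearGain_zero]
    exact nearGain_const_nonneg_of_tendsto (monotoneOn_LJ hA hB (by linarith) hαβ) hfar hpos hmin
      hconv ht.1 ht.2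
  have := (hasDerivAt_nearGain_const hP n).nonneg_of_forall_Ioc_le (by positivity) hnonneg
  linarith

/-- Suppose for every `N ≥ 2` the spear energy `J` (for `N` particles) admits
`Hstar N` as its global minimizer over `(0,∞)^{N−1}`, unique in the sense that any
global minimizer coincides with it on the indices `1, …, N−1`. Then there is a fixed
index `k ≥ 1` such that `N ↦ h*_{N,k}` does not converge to
`h̄ = (αAζ(α)/(βBζ(β)))^{1/(α−β)}` as `N → +∞`. -/
theorem spear_no_uniform_convergence
    (A B α β : ℝ) (hA : 0 < A) (hB : 0 < B) (hβ : 3 ≤ β) (hαβ : β < α)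
    (Hstar : ℕ → ℕ → ℝ)
    (hpos : ∀ N : ℕ, 2 ≤ N → ∀ k ∈ Finset.Icc 1 (N - 1), 0 < Hstar N k)
    (hmin : ∀ N : ℕ, 2 ≤ N → ∀ H : ℕ → ℝ,
      (∀ k ∈ Finset.Icc 1 (N - 1), 0 < H k) →
      spearJ A B α β N (Hstar N) ≤ spearJ A B α β N H)
    (huniq : ∀ N : ℕ, 2 ≤ N → ∀ H : ℕ → ℝ,
      (∀ k ∈ Finset.Icc 1 (N - 1), 0 < H k) →
      (∀ H' : ℕ → ℝ, (∀ k ∈ Finset.Icc 1 (N - 1), 0 < H' k) →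
        spearJ A B α β N H ≤ spearJ A B α β N H') →
      ∀ k ∈ Finset.Icc 1 (N - 1), H k = Hstar N k) :
    ∃ k : ℕ, 1 ≤ k ∧
      ¬ Filter.Tendsto (fun N : ℕ => Hstar N k) Filter.atTop
        (nhds ((α * A * zetaR α / (β * B * zetaR β)) ^ (1 / (α - β)))) :=
  spear_no_uniform_convergence_general A B α β hA hB hβ hαβ Hstar hpos hmin
end
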